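/- The map assigning to noise power σ² > 0 the value 1/log₂(1 + S/(I·x + σ²)) is concave in σ² for fixed constants S, I, x ≥ 0 with S > 0, hence satisfies scalability: α·F(σ²) > F(α·σ²) for α > 1 when F(σ²) > 0. -/

import Mathlib

/-!
Write `L u = log (1 + S / u)`. The map `u ↦ 1 / logb b (1 + S / u) = log b / L u` has derivative
`log b · S / (u (u + S) (L u)²)`, and `u (u + S) (L u)²` is strictly increasing since its derivative
`L u · ((2u + S) L u - 2S)` is positive: `(2u + S) L u > 2S` is the first term of the series
`log (1 + 1/a) = ∑ 2 / ((2k + 1) (2a + 1)^(2k + 1))` at `a = u / S`. So the map is strictly concave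
on `(0, ∞)`, and so is its translate by `I·x ≥ 0`. For a strictly concave `f ≥ 0` on `(0, ∞)`, every
chord slope to the right of `s` is below `f s / s` (let a third point tend to `0`); for the chord
from `t` to `α t` this is `f (α t) < α f t`.
-/

open Real Set Filter Topology

namespace ConcaveOn

variable {f : ℝ → ℝ}

theorem slope_le_div_of_nonneg (hf : ConcaveOn ℝ (Ioi 0) f) (hf₀ : ∀ x ∈ Ioi 0, 0 ≤ f x)
    {s t : ℝ} (hs : 0 < s) (hst : s < t) : (f t - f s) / (t - s) ≤ f s / s := by
  have hlim : Tendsto (fun ε => f s / (s - ε)) (𝓝[>] 0) (𝓝 (f s / s)) := by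
    have h : Tendsto (fun ε => f s / (s - ε)) (𝓝 0) (𝓝 (f s / (s - 0))) :=
      tendsto_const_nhds.div (tendsto_const_nhds.sub tendsto_id) (by simpa using hs.ne')
    simpa using h.mono_left nhdsWithin_le_nhds
  refine ge_of_tendsto hlim ?_
  filter_upwards [Ioo_mem_nhdsGT hs] with ε ⟨hε, hεs⟩
  calc (f t - f s) / (t - s) ≤ (f s - f ε) / (s - ε) :=
        hf.slope_anti_adjacent hε (hs.trans hst) hεs hst
    _ ≤ f s / (s - ε) := div_le_div_of_nonneg_right (by linarith [hf₀ ε hε]) (by linarith)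

end ConcaveOn

namespace StrictConcaveOn

variable {f : ℝ → ℝ}

theorem slope_lt_div_of_nonneg (hf : StrictConcaveOn ℝ (Ioi 0) f) (hf₀ : ∀ x ∈ Ioi 0, 0 ≤ f x)
    {s t : ℝ} (hs : 0 < s) (hst : s < t) : (f t - f s) / (t - s) < f s / s := by
  obtain ⟨m, hsm, hmt⟩ := exists_between hst
  calc (f t - f s) / (t - s) < (f m - f s) / (m - s) :=
        hf.secant_strict_mono hs (hs.trans hsm) (hs.trans hst) hsm.ne' hst.ne' hmt
    _ ≤ f s / s := hf.concaveOn.slope_le_div_of_nonneg hf₀ hs hsm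

theorem apply_mul_lt_mul_apply (hf : StrictConcaveOn ℝ (Ioi 0) f) (hf₀ : ∀ x ∈ Ioi 0, 0 ≤ f x)
    {α t : ℝ} (hα : 1 < α) (ht : 0 < t) : f (α * t) < α * f t := by
  have hslope := hf.slope_lt_div_of_nonneg hf₀ ht (lt_mul_of_one_lt_left ht hα)
  rw [show α * t - t = (α - 1) * t by ring, div_lt_div_iff₀ (by nlinarith) ht] at hslope
  nlinarith

end StrictConcaveOn

namespace Real

theorem two_div_two_mul_add_one_lt_log_one_add_inv {a : ℝ} (ha : 0 < a) :
    2 / (2 * a + 1) < log (1 + a⁻¹) := by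
  have hpartial := sum_le_hasSum (Finset.range 2) (fun k _ => by positivity)
    (hasSum_log_one_add_inv ha)
  norm_num [Finset.sum_range_succ] at hpartial
  have : 0 < ((2 * a + 1) ^ 3)⁻¹ := by positivity
  rw [div_eq_mul_inv]
  linarith

theorem two_mul_lt_mul_log_one_add_div {S u : ℝ} (hS : 0 < S) (hu : 0 < u) :
    2 * S < (2 * u + S) * log (1 + S / u) := by
  have h := two_div_two_mul_add_one_lt_log_one_add_inv (div_pos hu hS)
  rw [inv_div, show 2 * (u / S) + 1 = (2 * u + S) / S by field_simp,
    div_div_eq_mul_div, div_lt_iff₀ (by positivity)] at h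
  linarith

theorem hasDerivAt_log_one_add_div {S u : ℝ} (hu : u ≠ 0) (huS : u + S ≠ 0) :
    HasDerivAt (fun u => log (1 + S / u)) (-S / (u * (u + S))) u := by
  have h1 : 1 + S / u ≠ 0 := by rw [one_add_div hu]; exact div_ne_zero huS hu
  have h := ((hasDerivAt_inv hu).const_mul S |>.const_add 1).log (by rwa [← div_eq_mul_inv])
  simp only [← div_eq_mul_inv] at h
  convert h using 1
  rw [one_add_div hu]
  field_simp

theorem log_one_add_div_pos {S u : ℝ} (hS : 0 < S) (hu : 0 < u) : 0 < log (1 + S / u) :=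
  log_pos (lt_add_of_pos_right 1 (div_pos hS hu))

theorem strictMonoOn_mul_mul_log_one_add_div_sq {S : ℝ} (hS : 0 < S) :
    StrictMonoOn (fun u => u * (u + S) * log (1 + S / u) ^ 2) (Ioi 0) := by
  have hderiv : ∀ u ∈ Ioi (0 : ℝ), HasDerivAt (fun u => u * (u + S) * log (1 + S / u) ^ 2)
      (log (1 + S / u) * ((2 * u + S) * log (1 + S / u) - 2 * S)) u := by
    intro u (hu : 0 < u)
    refine (((hasDerivAt_id u).mul ((hasDerivAt_id u).add_const S)).mul
      ((hasDerivAt_log_one_add_div hu.ne' (by positivity)).pow 2)).congr_deriv ?_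
    simp only [Pi.mul_apply, Pi.pow_apply, id_eq]
    field_simp
    ring
  refine strictMonoOn_of_deriv_pos (convex_Ioi 0)
    (fun u hu => (hderiv u hu).continuousAt.continuousWithinAt) ?_
  rw [interior_Ioi]
  intro u (hu : 0 < u)
  rw [(hderiv u hu).deriv]
  exact mul_pos (log_one_add_div_pos hS hu) (sub_pos.2 (two_mul_lt_mul_log_one_add_div hS hu))

theorem strictConcaveOn_one_div_logb_one_add_div {b S : ℝ} (hb : 1 < b) (hS : 0 < S) :
    StrictConcaveOn ℝ (Ioi 0) (fun u => 1 / logb b (1 + S / u)) := by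
  have hderiv : ∀ u ∈ Ioi (0 : ℝ), HasDerivAt (fun u => 1 / logb b (1 + S / u))
      (log b * S / (u * (u + S) * log (1 + S / u) ^ 2)) u := by
    intro u (hu : 0 < u)
    simp only [logb, one_div_div]
    refine ((hasDerivAt_const u (log b)).div (hasDerivAt_log_one_add_div hu.ne' (by positivity))
      (log_one_add_div_pos hS hu).ne').congr_deriv ?_
    field_simp
    ring
  refine StrictAntiOn.strictConcaveOn_of_deriv (convex_Ioi 0)
    (fun u hu => (hderiv u hu).continuousAt.continuousWithinAt) ?_
  rw [interior_Ioi]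
  intro u (hu : 0 < u) v hv huv
  rw [(hderiv u hu).deriv, (hderiv v hv).deriv]
  have hL := log_one_add_div_pos hS hu
  have hlogb := log_pos hb
  exact div_lt_div_of_pos_left (by positivity) (by positivity)
    (strictMonoOn_mul_mul_log_one_add_div_sq hS hu hv huv)

end Real

/-- The map `F : σ² ↦ 1 / log₂(1 + S/(I·x + σ²))` is concave on `(0, ∞)` for fixed
`S > 0`, `I ≥ 0`, `x ≥ 0`, and hence scalable: `F(α·σ²) < α·F(σ²)` whenever `α > 1`
and `F(σ²) > 0`. -/
theorem noise_map_concave_and_scalable (S I x : ℝ) (hS : 0 < S) (hI : 0 ≤ I)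
    (hx : 0 ≤ x) :
    ConcaveOn ℝ (Set.Ioi (0 : ℝ))
      (fun t : ℝ => 1 / Real.logb 2 (1 + S / (I * x + t))) ∧
    (∀ α > (1 : ℝ), ∀ t > (0 : ℝ),
      0 < 1 / Real.logb 2 (1 + S / (I * x + t)) →
      1 / Real.logb 2 (1 + S / (I * x + α * t)) <
        α * (1 / Real.logb 2 (1 + S / (I * x + t)))) := by
  have hc : 0 ≤ I * x := mul_nonneg hI hx
  have hF : StrictConcaveOn ℝ (Ioi 0) (fun t => 1 / logb 2 (1 + S / (I * x + t))) :=
    ((strictConcaveOn_one_div_logb_one_add_div one_lt_two hS).translate_right (I * x)).subset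
      (fun t (ht : 0 < t) => show 0 < I * x + t by positivity) (convex_Ioi 0)
  have hF₀ : ∀ t ∈ Ioi (0 : ℝ), 0 ≤ 1 / logb 2 (1 + S / (I * x + t)) := fun t (ht : 0 < t) =>
    one_div_nonneg.2 (logb_pos one_lt_two (lt_add_of_pos_right 1 (by positivity))).le
  exact ⟨hF.concaveOn, fun α hα t ht _ => hF.apply_mul_lt_mul_apply hF₀ hα ht⟩
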